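/- Fix α ≥ 0, β > 0, b ∈ (0,∞]. For L' > L ≥ 0 with L + α > 0, the fixed-point map H^FP is monotone in L: if u ∈ H^FP_{α,β,L,b}(g) then u ∈ H^FP_{α,β,L',b}(g). Key ingredient: with s(L) := β/(L+α), the map L ↦ (L+α)√(2s(L)) = √(2β(L+α)) is monotonically increasing, and L ↦ (L+α)(b/2 + s(L)/b) - L·b = -bL/2 + αb/2 + β/b is monotonically decreasing. -/

import Mathlib

open scoped ENNReal

/-- The fixed-point map `H^FP_{α,β,L,b}` characterizing `L`-stationary points.
For `b = ∞` the boundary cases `u = ±b` are void and `√(2s) ≤ b` always holds. -/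
noncomputable def HFP (α β L : ℝ) (b : ℝ≥0∞) (g u : ℝ) : Prop :=
  let s : ℝ := β / (L + α)
  if b = ⊤ then
    (u = 0 ∧ |g| ≤ (L + α) * Real.sqrt (2 * s)) ∨
    (0 < α ∧ α * u = -g ∧ α * Real.sqrt (2 * s) ≤ |g|) ∨
    (α = 0 ∧ g = 0 ∧ Real.sqrt (2 * s) ≤ u)
  else
    let B : ℝ := b.toReal
    if Real.sqrt (2 * s) ≤ B then
      (u = -B ∧ α * B ≤ g) ∨
      (u = B ∧ g ≤ -(α * B)) ∨
      (u = 0 ∧ |g| ≤ (L + α) * Real.sqrt (2 * s)) ∨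
      (0 < α ∧ α * u = -g ∧ α * Real.sqrt (2 * s) ≤ |g| ∧ |g| ≤ α * B) ∨
      (α = 0 ∧ g = 0 ∧ Real.sqrt (2 * s) ≤ u ∧ u ≤ B)
    else
      (u = -B ∧ (L + α) * (B / 2 + s / B) - L * B ≤ g) ∨
      (u = B ∧ g ≤ -((L + α) * (B / 2 + s / B) - L * B)) ∨
      (u = 0 ∧ |g| ≤ (L + α) * (B / 2 + s / B)) ∨
      (0 < α ∧ α * u = -g ∧ α * Real.sqrt (2 * s) ≤ |g| ∧ |g| ≤ α * B) ∨
      (α = 0 ∧ g = 0 ∧ Real.sqrt (2 * s) ≤ u ∧ u ≤ B)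

/-!
Write `c = L + α`, `s = β / c` and `B = b.toReal`. The threshold `√(2s)` decreases in `L`, so the
interior cases persist and the regime can only switch from `√(2s) > B` to `√(2s) ≤ B`. The zero
threshold, `c √(2s) = √(2βc)` if `√(2s) ≤ B` and `cB/2 + β/B` otherwise, increases with `L`; the
edge threshold `c (B/2 + s/B) - LB = -BL/2 + αB/2 + β/B` of the regime `√(2s) > B` decreases.
When the regime switches, `c ≤ 2β/B² ≤ c'`, and at the crossover `c = 2β/B²` the thresholds of
the two regimes agree: both zero thresholds equal `2β/B`, both edge thresholds `αB`.
-/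

open Real

section Thresholds

variable {α β B L L' c c' : ℝ}

theorem mul_sqrt_two_mul_div (hβ : 0 ≤ β) (hc : 0 < c) :
    c * √(2 * (β / c)) = √(2 * β * c) := by
  rw [show 2 * β * c = 2 * (β / c) * c ^ 2 by field_simp,
    sqrt_mul (by positivity) (c ^ 2), sqrt_sq hc.le, mul_comm]

theorem sqrt_two_mul_div_le_sqrt_two_mul_div (hβ : 0 ≤ β) (hc : 0 < c) (hcc' : c ≤ c') :
    √(2 * (β / c')) ≤ √(2 * (β / c)) := by
  gcongr

theorem sqrt_two_mul_div_le_iff (hc : 0 < c) (hB : 0 ≤ B) :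
    √(2 * (β / c)) ≤ B ↔ 2 * β ≤ c * B ^ 2 := by
  rw [sqrt_le_left hB, ← div_le_iff₀' hc, mul_div_assoc]

theorem mul_half_add_div_div (hc : c ≠ 0) : c * (B / 2 + β / c / B) = c * B / 2 + β / B := by
  rw [mul_add, mul_div_assoc', div_div, mul_div_assoc', mul_div_mul_left _ _ hc]

theorem monotone_sqrt_two_mul_mul_add (hβ : 0 ≤ β) :
    Monotone fun t : ℝ => √(2 * β * (t + α)) := fun _ _ h => by
  dsimp only
  gcongr

theorem antitone_neg_mul_div_two_add (hB : 0 ≤ B) :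
    Antitone fun t : ℝ => -B * t / 2 + α * B / 2 + β / B := fun _ _ h => by
  dsimp only
  nlinarith

theorem mul_div_two_add_div_le_sqrt (hβ : 0 ≤ β) (hB : 0 < B) (hc : c * B ^ 2 ≤ 2 * β)
    (hc' : 2 * β ≤ c' * B ^ 2) : c * B / 2 + β / B ≤ √(2 * β * c') := by
  have hcB : c * B / 2 ≤ β / B := by
    rw [le_div_iff₀ hB]; nlinarith
  calc c * B / 2 + β / B ≤ 2 * β / B := by linarith [show 2 * β / B = β / B + β / B by ring]
    _ = √(2 * β * (2 * β / B ^ 2)) := by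
      rw [← sqrt_sq (by positivity : 0 ≤ 2 * β / B)]
      congr 1
      field_simp
    _ ≤ √(2 * β * c') := by
      gcongr
      rwa [div_le_iff₀ (by positivity)]

theorem zero_threshold_le (hβ : 0 ≤ β) (hLα : 0 < L + α) (hLL' : L ≤ L') :
    (L + α) * √(2 * (β / (L + α))) ≤ (L' + α) * √(2 * (β / (L' + α))) := by
  rw [mul_sqrt_two_mul_div hβ hLα, mul_sqrt_two_mul_div hβ (by linarith)]
  exact monotone_sqrt_two_mul_mul_add hβ hLL'

theorem edge_threshold_eq (hLα : L + α ≠ 0) :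
    (L + α) * (B / 2 + β / (L + α) / B) - L * B = -B * L / 2 + α * B / 2 + β / B := by
  rw [mul_half_add_div_div hLα]
  ring

theorem mul_le_neg_mul_div_two_add (hB : 0 < B) (h : (L + α) * B ^ 2 ≤ 2 * β) :
    α * B ≤ -B * L / 2 + α * B / 2 + β / B := by
  have hdiff : -B * L / 2 + α * B / 2 + β / B - α * B = (2 * β - (L + α) * B ^ 2) / (2 * B) := by
    field_simp
    ring
  rw [← sub_nonneg, hdiff]
  exact div_nonneg (by linarith) (by positivity)

end Thresholds

section Interior

variable {α τ τ' B g u : ℝ}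

theorem HFP_interior_top_of_le (hτ : τ' ≤ τ) :
    (0 < α ∧ α * u = -g ∧ α * τ ≤ |g|) ∨ (α = 0 ∧ g = 0 ∧ τ ≤ u) →
    (0 < α ∧ α * u = -g ∧ α * τ' ≤ |g|) ∨ (α = 0 ∧ g = 0 ∧ τ' ≤ u)
  | .inl ⟨hα, hu, hτg⟩ => .inl ⟨hα, hu, (mul_le_mul_of_nonneg_left hτ hα.le).trans hτg⟩
  | .inr ⟨hα, hg, hτu⟩ => .inr ⟨hα, hg, hτ.trans hτu⟩

theorem HFP_interior_of_le (hτ : τ' ≤ τ) :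
    (0 < α ∧ α * u = -g ∧ α * τ ≤ |g| ∧ |g| ≤ α * B) ∨ (α = 0 ∧ g = 0 ∧ τ ≤ u ∧ u ≤ B) →
    (0 < α ∧ α * u = -g ∧ α * τ' ≤ |g| ∧ |g| ≤ α * B) ∨ (α = 0 ∧ g = 0 ∧ τ' ≤ u ∧ u ≤ B)
  | .inl ⟨hα, hu, hτg, hgB⟩ =>
    .inl ⟨hα, hu, (mul_le_mul_of_nonneg_left hτ hα.le).trans hτg, hgB⟩
  | .inr ⟨hα, hg, hτu, huB⟩ => .inr ⟨hα, hg, hτ.trans hτu, huB⟩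

end Interior

section Monotonicity

variable {α β L L' g u : ℝ} {b : ℝ≥0∞}

theorem HFP_top_of_le (hβ : 0 ≤ β) (hLα : 0 < L + α) (hLL' : L ≤ L')
    (h : HFP α β L ⊤ g u) : HFP α β L' ⊤ g u := by
  simp only [HFP, if_true] at h ⊢
  rcases h with ⟨hu, hg⟩ | hint
  · exact .inl ⟨hu, hg.trans (zero_threshold_le hβ hLα hLL')⟩
  · exact .inr <| HFP_interior_top_of_le
      (sqrt_two_mul_div_le_sqrt_two_mul_div hβ hLα (by linarith)) hint

theorem HFP_of_le_of_sqrt_le (hβ : 0 ≤ β) (hLα : 0 < L + α) (hLL' : L ≤ L') (hb : b ≠ ⊤)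
    (hsmall : √(2 * (β / (L + α))) ≤ b.toReal) (h : HFP α β L b g u) : HFP α β L' b g u := by
  have hτ := sqrt_two_mul_div_le_sqrt_two_mul_div hβ hLα (by linarith : L + α ≤ L' + α)
  simp only [HFP, if_neg hb, if_pos hsmall, if_pos (hτ.trans hsmall)] at h ⊢
  rcases h with hedge | hedge | ⟨hu, hg⟩ | hint
  · exact .inl hedge
  · exact .inr <| .inl hedge
  · exact .inr <| .inr <| .inl ⟨hu, hg.trans (zero_threshold_le hβ hLα hLL')⟩
  · exact .inr <| .inr <| .inr <| HFP_interior_of_le hτ hint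

theorem HFP_of_le_of_lt_sqrt (hβ : 0 ≤ β) (hLα : 0 < L + α)
    (hLL' : L ≤ L') (hb : b ≠ ⊤) (hlarge : b.toReal < √(2 * (β / (L + α))))
    (h : HFP α β L b g u) : HFP α β L' b g u := by
  have hL'α : 0 < L' + α := by linarith
  have hτ := sqrt_two_mul_div_le_sqrt_two_mul_div hβ hLα (by linarith : L + α ≤ L' + α)
  simp only [HFP, if_neg hb, if_neg hlarge.not_ge] at h ⊢
  set B := b.toReal
  have hB : 0 ≤ B := ENNReal.toReal_nonneg
  have hcB : (L + α) * B ^ 2 < 2 * β :=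
    not_le.1 fun hle => hlarge.not_ge ((sqrt_two_mul_div_le_iff hLα hB).2 hle)
  rw [edge_threshold_eq hLα.ne', mul_half_add_div_div hLα.ne'] at h
  split_ifs with hsmall'
  · have hc'B : 2 * β ≤ (L' + α) * B ^ 2 := (sqrt_two_mul_div_le_iff hL'α hB).1 hsmall'
    have hBpos : 0 < B := hB.lt_of_ne fun h0 => by
      rw [← h0] at hcB hc'B
      linarith
    have hedge := mul_le_neg_mul_div_two_add hBpos hcB.le
    rcases h with ⟨hu, hg⟩ | ⟨hu, hg⟩ | ⟨hu, hg⟩ | hint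
    · exact .inl ⟨hu, hedge.trans hg⟩
    · exact .inr <| .inl ⟨hu, hg.trans (neg_le_neg hedge)⟩
    · refine .inr <| .inr <| .inl ⟨hu, hg.trans ?_⟩
      rw [mul_sqrt_two_mul_div hβ hL'α]
      exact mul_div_two_add_div_le_sqrt hβ hBpos hcB.le hc'B
    · exact .inr <| .inr <| .inr <| HFP_interior_of_le hτ hint
  · rw [edge_threshold_eq hL'α.ne', mul_half_add_div_div hL'α.ne']
    have hedge := antitone_neg_mul_div_two_add (α := α) (β := β) hB hLL'
    rcases h with ⟨hu, hg⟩ | ⟨hu, hg⟩ | ⟨hu, hg⟩ | hint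
    · exact .inl ⟨hu, hedge.trans hg⟩
    · exact .inr <| .inl ⟨hu, hg.trans (neg_le_neg hedge)⟩
    · exact .inr <| .inr <| .inl ⟨hu, hg.trans (by gcongr)⟩
    · exact .inr <| .inr <| .inr <| HFP_interior_of_le hτ hint

end Monotonicity

theorem HFP_monotone_in_L_general (α β : ℝ) (hβ : 0 < β)
    (b : ℝ≥0∞) (L L' : ℝ) (hLL' : L < L')
    (hLα : 0 < L + α) (g u : ℝ) (h : HFP α β L b g u) :
    HFP α β L' b g u ∧
    MonotoneOn (fun t : ℝ => Real.sqrt (2 * β * (t + α))) (Set.Ici 0) ∧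
    (∀ B : ℝ, 0 < B →
      AntitoneOn (fun t : ℝ => -B * t / 2 + α * B / 2 + β / B) (Set.Ici 0)) := by
  refine ⟨?_, (monotone_sqrt_two_mul_mul_add hβ.le).monotoneOn _,
    fun B hB => (antitone_neg_mul_div_two_add hB.le).antitoneOn _⟩
  rcases eq_or_ne b ⊤ with rfl | hb
  · exact HFP_top_of_le hβ.le hLα hLL'.le h
  rcases le_or_gt (√(2 * (β / (L + α)))) b.toReal with hsmall | hlarge
  · exact HFP_of_le_of_sqrt_le hβ.le hLα hLL'.le hb hsmall h
  · exact HFP_of_le_of_lt_sqrt hβ.le hLα hLL'.le hb hlarge h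

/-- Monotonicity of the fixed-point map in `L`: if `u ∈ H^FP_{α,β,L,b}(g)` and `L' > L`,
then `u ∈ H^FP_{α,β,L',b}(g)`. The key ingredients are that `L ↦ (L+α)√(2s(L)) = √(2β(L+α))`
is monotonically increasing and `L ↦ (L+α)(b/2 + s(L)/b) - Lb = -bL/2 + αb/2 + β/b`
is monotonically decreasing. -/
theorem HFP_monotone_in_L (α β : ℝ) (hα : 0 ≤ α) (hβ : 0 < β)
    (b : ℝ≥0∞) (hb : 0 < b) (L L' : ℝ) (hL : 0 ≤ L) (hLL' : L < L')
    (hLα : 0 < L + α) (g u : ℝ) (h : HFP α β L b g u) :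
    HFP α β L' b g u ∧
    MonotoneOn (fun t : ℝ => Real.sqrt (2 * β * (t + α))) (Set.Ici 0) ∧
    (∀ B : ℝ, 0 < B →
      AntitoneOn (fun t : ℝ => -B * t / 2 + α * B / 2 + β / B) (Set.Ici 0)) :=
  HFP_monotone_in_L_general α β hβ b L L' hLL' hLα g u h
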